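/- arXiv:2504.17244 — 6 statements merged into one kernel-verified Lean document; each statement's English description precedes it below -/
import Mathlib

section
/- Let M be a k×(k+n) matrix over F_q whose first k columns form the identity and in which every k columns are linearly independent, and let G_i(n,k) be formed from i systematic columns and n−i parity columns of M. Then for every j ∈ [k], every recovery set R for e_j in G_i(n,k) other than a singleton consisting of a column equal to e_j has cardinality exactly k. Consequently every recovery set in G_i(n,k) has size either 1 or k. -/
open Matrix

/-- `R ⊆ [n]` is a recovery set for object `j` under generator matrix `G`:
the standard basis vector `e_j` lies in the span of the columns of `G` indexed by `R`,
and minimally so. -/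
def IsRecoverySet {F : Type*} [Field F] {k n : ℕ} (G : Matrix (Fin k) (Fin n) F)
    (j : Fin k) (R : Finset (Fin n)) : Prop :=
  (Pi.single j 1 : Fin k → F) ∈ Submodule.span F (Gᵀ '' (R : Set (Fin n))) ∧
    ∀ S : Finset (Fin n), S ⊂ R →
      (Pi.single j 1 : Fin k → F) ∉ Submodule.span F (Gᵀ '' (S : Set (Fin n)))

/-- A valid allocation of request rates `lam` to recovery sets: nonnegative weights
`w j R` supported on recovery sets, summing to `lam j` for each object `j`, and
loading each server `l` by at most its unit capacity. -/
def IsValidAllocation {F : Type*} [Field F] {k n : ℕ} (G : Matrix (Fin k) (Fin n) F)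
    (lam : Fin k → ℝ) (w : Fin k → Finset (Fin n) → ℝ) : Prop :=
  (∀ j R, 0 ≤ w j R) ∧
  (∀ j R, ¬ IsRecoverySet G j R → w j R = 0) ∧
  (∀ j, ∑ R : Finset (Fin n), w j R = lam j) ∧
  (∀ l : Fin n, ∑ j : Fin k, ∑ R ∈ Finset.univ.filter (fun R : Finset (Fin n) => l ∈ R),
      w j R ≤ 1)

/-- The service rate region of `G`. -/
def ServiceRegion {F : Type*} [Field F] {k n : ℕ} (G : Matrix (Fin k) (Fin n) F) :
    Set (Fin k → ℝ) :=
  {lam | (∀ j, 0 ≤ lam j) ∧ ∃ w, IsValidAllocation G lam w}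

/-- `Gmat M i` = the `k × n` matrix formed by the `i` leftmost (systematic) columns of `M`
followed by the `n - i` rightmost (parity) columns of `M`. -/
def Gmat {F : Type*} [Field F] {k n : ℕ} (M : Matrix (Fin k) (Fin (k + n)) F) (i : ℕ) :
    Matrix (Fin k) (Fin n) F :=
  Matrix.of fun r l =>
    if (l : ℕ) < i then M r ⟨(l : ℕ), by have := l.isLt; omega⟩
    else M r ⟨k + (l : ℕ), by have := l.isLt; omega⟩

/-
The columns of `G_i(n,k)` are distinct columns of `M`, so any `k` of them are independent.
A recovery set `R` with more than `k` columns contains `k` independent columns, which already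
span `F^k ∋ e_j`, contradicting minimality; so `|R| ≤ k`. If no column of `R` is `e_j`, then
`e_j` is a column of `M` outside those indexed by `R`, and when `|R| < k` the columns of `R`
together with `e_j` are at most `k` columns of `M`, hence independent, so `e_j` is not in the
span of `R`. A recovery set containing a column equal to `e_j` is that singleton by minimality.
-/

open Module Submodule

section IndependentSubfamilies

variable {K V ι : Type*} [Field K] [AddCommGroup V] [Module K V] {v : ι → V} {r : ℕ}

theorem linearIndepOn_of_card_le [Fintype ι]
    (hv : ∀ S : Finset ι, S.card = r → LinearIndepOn K v S) (hr : r ≤ Fintype.card ι)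
    {S : Finset ι} (hS : S.card ≤ r) : LinearIndepOn K v S := by
  obtain ⟨T, hST, hT⟩ := Finset.exists_superset_card_eq hS hr
  exact (hv T hT).mono (Finset.coe_subset.2 hST)

theorem LinearIndepOn.span_image_eq_top_of_card_eq_finrank [FiniteDimensional K V]
    {S : Finset ι} (hS : LinearIndepOn K v S) (hcard : S.card = finrank K V) :
    span K (v '' S) = ⊤ := by
  rw [Set.image_eq_range]
  exact LinearIndependent.span_eq_top_of_card_eq_finrank' hS (by simpa using hcard)

theorem notMem_span_image_of_card_lt
    (hv : ∀ S : Finset ι, S.card ≤ r → LinearIndepOn K v S)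
    {T : Finset ι} (hT : T.card < r) {a : ι} (ha : a ∉ T) : v a ∉ span K (v '' T) := by
  classical
  have hins : LinearIndepOn K v (insert a T : Finset ι) :=
    hv _ ((Finset.card_insert_le a T).trans hT)
  rw [Finset.coe_insert, linearIndepOn_insert (Finset.mem_coe.not.2 ha)] at hins
  exact hins.2

end IndependentSubfamilies

section RecoverySet

variable {F : Type*} [Field F] {k n : ℕ} {G : Matrix (Fin k) (Fin n) F} {j : Fin k}
  {R : Finset (Fin n)}

theorem IsRecoverySet.card_le (hR : IsRecoverySet G j R)
    (hG : ∀ S : Finset (Fin n), S.card = k → LinearIndepOn F Gᵀ S) : R.card ≤ k := by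
  by_contra! hlt
  obtain ⟨S, hSR, hS⟩ := R.exists_subset_card_eq hlt.le
  have hspan : span F (Gᵀ '' S) = ⊤ :=
    (hG S hS).span_image_eq_top_of_card_eq_finrank (by simp [hS])
  refine hR.2 S (hSR.ssubset_of_ne ?_) (hspan ▸ mem_top)
  rintro rfl
  omega

theorem IsRecoverySet.eq_singleton_of_transpose_eq (hR : IsRecoverySet G j R) {l : Fin n}
    (hl : l ∈ R) (hcol : Gᵀ l = Pi.single j 1) : R = {l} := by
  by_contra hne
  refine hR.2 {l} ((Finset.singleton_subset_iff.2 hl).ssubset_of_ne (Ne.symm hne)) ?_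
  rw [Finset.coe_singleton, Set.image_singleton (f := Gᵀ), hcol]
  exact mem_span_singleton_self _

end RecoverySet

def gmatCol {k n : ℕ} (i : ℕ) (l : Fin n) : Fin (k + n) :=
  if (l : ℕ) < i then ⟨l, by omega⟩ else ⟨k + l, by omega⟩

theorem gmatCol_injective {k n i : ℕ} (hik : i ≤ k) :
    Function.Injective (gmatCol (k := k) (n := n) i) := by
  intro a b hab
  have := congrArg Fin.val hab
  unfold gmatCol at this
  split_ifs at this <;> simp only at this <;> omega

theorem transpose_Gmat_apply {F : Type*} [Field F] {k n : ℕ}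
    (M : Matrix (Fin k) (Fin (k + n)) F) (i : ℕ) (l : Fin n) :
    (Gmat M i)ᵀ l = Mᵀ (gmatCol i l) := by
  ext r
  by_cases h : (l : ℕ) < i <;> simp [Gmat, gmatCol, h]

theorem image_transpose_Gmat {F : Type*} [Field F] {k n : ℕ}
    (M : Matrix (Fin k) (Fin (k + n)) F) (i : ℕ) (s : Set (Fin n)) :
    (Gmat M i)ᵀ '' s = Mᵀ '' (gmatCol i '' s) := by
  ext v
  constructor
  · rintro ⟨l, hl, rfl⟩
    exact ⟨gmatCol i l, ⟨l, hl, rfl⟩, (transpose_Gmat_apply M i l).symm⟩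
  · rintro ⟨_, ⟨l, hl, rfl⟩, rfl⟩
    exact ⟨l, hl, transpose_Gmat_apply M i l⟩

theorem linearIndepOn_transpose_Gmat {F : Type*} [Field F] {k n : ℕ}
    {M : Matrix (Fin k) (Fin (k + n)) F} {i : ℕ} (hik : i ≤ k) {S : Finset (Fin n)}
    (hS : LinearIndepOn F Mᵀ (gmatCol (k := k) i '' S)) :
    LinearIndepOn F (Gmat M i)ᵀ S := by
  have hcomp := hS.comp_of_image (gmatCol_injective hik).injOn
  have hfun : ((Gmat M i)ᵀ : Fin n → Fin k → F) = Mᵀ ∘ gmatCol i :=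
    funext (transpose_Gmat_apply M i)
  exact hfun ▸ hcomp

theorem recovery_set_size_one_or_k_general
    {F : Type*} [Field F] {k n : ℕ}
    (M : Matrix (Fin k) (Fin (k + n)) F)
    (hsys : ∀ j : Fin k, ∀ r : Fin k, M r (Fin.castAdd n j) = if r = j then (1 : F) else 0)
    (hMDS : ∀ S : Finset (Fin (k + n)), S.card = k →
      LinearIndependent F (fun l : S => Mᵀ (l : Fin (k + n))))
    (i : ℕ) (hik : i ≤ k) (j : Fin k) (R : Finset (Fin n))
    (hR : IsRecoverySet (Gmat M i) j R) :
    ((¬ ∃ l : Fin n, R = {l} ∧ (Gmat M i)ᵀ l = (Pi.single j 1 : Fin k → F)) → R.card = k) ∧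
      (R.card = 1 ∨ R.card = k) := by
  have hM : ∀ S : Finset (Fin (k + n)), S.card ≤ k → LinearIndepOn F Mᵀ S :=
    fun S => linearIndepOn_of_card_le hMDS (by simp)
  have hG : ∀ S : Finset (Fin n), S.card = k → LinearIndepOn F (Gmat M i)ᵀ S := fun S hS =>
    linearIndepOn_transpose_Gmat hik <| by
      simpa using hM (S.image (gmatCol i)) (Finset.card_image_le.trans hS.le)
  have hej : Mᵀ (Fin.castAdd n j) = Pi.single j 1 := by
    ext r
    simp [hsys, Pi.single_apply]
  have hcard : (¬ ∃ l : Fin n, R = {l} ∧ (Gmat M i)ᵀ l = Pi.single j 1) → R.card = k := by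
    intro hno
    refine le_antisymm (hR.card_le hG) (not_lt.1 fun hlt => ?_)
    have hout : Fin.castAdd n j ∉ R.image (gmatCol i) := by
      simp only [Finset.mem_image, not_exists, not_and]
      intro l hl hlj
      refine hno ⟨l, hR.eq_singleton_of_transpose_eq hl ?_, ?_⟩ <;>
        rw [transpose_Gmat_apply, hlj, hej]
    refine notMem_span_image_of_card_lt hM (Finset.card_image_le.trans_lt hlt) hout ?_
    rw [hej, Finset.coe_image, ← image_transpose_Gmat]
    exact hR.1
  refine ⟨hcard, ?_⟩
  by_cases hsingle : ∃ l : Fin n, R = {l} ∧ (Gmat M i)ᵀ l = Pi.single j 1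
  · obtain ⟨l, rfl, -⟩ := hsingle
    exact .inl (Finset.card_singleton l)
  · exact .inr (hcard hsingle)

theorem recovery_set_size_one_or_k
    {F : Type*} [Field F] [Fintype F] {k n : ℕ} (hk : 2 ≤ k) (hkn : k ≤ n)
    (hq : k + n + 1 ≤ Fintype.card F)
    (M : Matrix (Fin k) (Fin (k + n)) F)
    (hsys : ∀ j : Fin k, ∀ r : Fin k, M r (Fin.castAdd n j) = if r = j then (1 : F) else 0)
    (hMDS : ∀ S : Finset (Fin (k + n)), S.card = k →
      LinearIndependent F (fun l : S => Mᵀ (l : Fin (k + n))))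
    (i : ℕ) (hik : i ≤ k) (j : Fin k) (R : Finset (Fin n))
    (hR : IsRecoverySet (Gmat M i) j R) :
    ((¬ ∃ l : Fin n, R = {l} ∧ (Gmat M i)ᵀ l = (Pi.single j 1 : Fin k → F)) → R.card = k) ∧
      (R.card = 1 ∨ R.card = k) :=
  recovery_set_size_one_or_k_general M hsys hMDS i hik j R hR
end

section
/- For any k×n generator matrix G over F_q, any achievable request vector λ = (λ_1,…,λ_k) ∈ S(G), and any nonnegative weights d_1,…,d_n on the servers such that Σ_{l ∈ R} d_l ≥ 1 for every recovery set R of every object j ∈ [k] (a fractional vertex cover), it holds that Σ_{j=1}^k λ_j ≤ Σ_{l=1}^n d_l. -/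
open Matrix

theorem fractional_vertex_cover_bounds_sum_rate
    {F : Type*} [Field F] {k n : ℕ} (hk : 1 ≤ k) (hkn : k ≤ n)
    (G : Matrix (Fin k) (Fin n) F)
    (lam : Fin k → ℝ) (hlam : lam ∈ ServiceRegion G)
    (d : Fin n → ℝ) (hd : ∀ l, 0 ≤ d l)
    (hcover : ∀ (j : Fin k) (R : Finset (Fin n)), IsRecoverySet G j R → 1 ≤ ∑ l ∈ R, d l) :
    ∑ j, lam j ≤ ∑ l, d l := by
  obtain ⟨hpos, w, hw0, hwsupp, hwsum, hload⟩ := hlam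
  calc ∑ j, lam j = ∑ j, ∑ R : Finset (Fin n), w j R := by
        simp [hwsum]
    _ ≤ ∑ j, ∑ R : Finset (Fin n), w j R * ∑ l ∈ R, d l := by
        refine Finset.sum_le_sum fun j _ => Finset.sum_le_sum fun R _ => ?_
        by_cases h : IsRecoverySet G j R
        · have h1 := hcover j R h
          nlinarith [hw0 j R]
        · simp [hwsupp j R h]
    _ = ∑ j, ∑ R : Finset (Fin n), ∑ l, if l ∈ R then w j R * d l else 0 := by
        refine Finset.sum_congr rfl fun j _ => Finset.sum_congr rfl fun R _ => ?_
        rw [Finset.mul_sum, Finset.sum_ite_mem, Finset.univ_inter]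
    _ = ∑ j, ∑ l, ∑ R : Finset (Fin n), if l ∈ R then w j R * d l else 0 :=
        Finset.sum_congr rfl fun j _ => Finset.sum_comm
    _ = ∑ l, d l * ∑ j, ∑ R ∈ Finset.univ.filter (fun R : Finset (Fin n) => l ∈ R), w j R := by
        rw [Finset.sum_comm]
        refine Finset.sum_congr rfl fun l _ => ?_
        rw [Finset.mul_sum]
        refine Finset.sum_congr rfl fun j _ => ?_
        rw [Finset.mul_sum, Finset.sum_filter]
        refine Finset.sum_congr rfl fun R _ => ?_
        split <;> ring
    _ ≤ ∑ l, d l * 1 := Finset.sum_le_sum fun l _ =>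
        mul_le_mul_of_nonneg_left (hload l) (hd l)
    _ = ∑ l, d l := by simp
end

section
/- For any k×n generator matrix G over F_q, any subset I ⊆ [k], any achievable request vector λ ∈ S(G), and any nonnegative weights d_1,…,d_n on the servers such that Σ_{l ∈ R} d_l ≥ 1 for every recovery set R of every object j ∈ I, it holds that Σ_{j ∈ I} λ_j ≤ Σ_{l=1}^n d_l. -/
open Matrix

theorem fractional_vertex_cover_bounds_sum_rate_subgraph
    {F : Type*} [Field F] {k n : ℕ} (hk : 1 ≤ k) (hkn : k ≤ n)
    (G : Matrix (Fin k) (Fin n) F) (I : Finset (Fin k))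
    (lam : Fin k → ℝ) (hlam : lam ∈ ServiceRegion G)
    (d : Fin n → ℝ) (hd : ∀ l, 0 ≤ d l)
    (hcover : ∀ j ∈ I, ∀ R : Finset (Fin n), IsRecoverySet G j R → 1 ≤ ∑ l ∈ R, d l) :
    ∑ j ∈ I, lam j ≤ ∑ l, d l := by
  obtain ⟨hlam0, w, hw0, hwsupp, hwsum, hload⟩ := hlam
  calc ∑ j ∈ I, lam j = ∑ j ∈ I, ∑ R : Finset (Fin n), w j R := by
        exact Finset.sum_congr rfl fun j _ => (hwsum j).symm
    _ ≤ ∑ j ∈ I, ∑ R : Finset (Fin n), w j R * ∑ l ∈ R, d l := by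
        refine Finset.sum_le_sum fun j hj => Finset.sum_le_sum fun R _ => ?_
        by_cases h : IsRecoverySet G j R
        · nlinarith [hw0 j R, hcover j hj R h]
        · simp [hwsupp j R h]
    _ = ∑ j ∈ I, ∑ R : Finset (Fin n), ∑ l ∈ R, w j R * d l := by
        simp [Finset.mul_sum]
    _ = ∑ j ∈ I, ∑ R : Finset (Fin n), ∑ l : Fin n,
          if l ∈ R then w j R * d l else 0 := by
        simp [Finset.sum_ite_mem, Finset.univ_inter]
    _ = ∑ l : Fin n, ∑ j ∈ I, ∑ R : Finset (Fin n),
          if l ∈ R then w j R * d l else 0 := by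
        refine Eq.trans (Finset.sum_congr rfl fun j _ => Finset.sum_comm) ?_
        exact Finset.sum_comm
    _ = ∑ l : Fin n, d l * ∑ j ∈ I, ∑ R ∈ Finset.univ.filter
          (fun R : Finset (Fin n) => l ∈ R), w j R := by
        refine Finset.sum_congr rfl fun l _ => ?_
        rw [Finset.mul_sum]
        refine Finset.sum_congr rfl fun j _ => ?_
        rw [Finset.mul_sum, Finset.sum_filter]
        exact Finset.sum_congr rfl fun R _ => by split <;> ring
    _ ≤ ∑ l : Fin n, d l * 1 := by
        refine Finset.sum_le_sum fun l _ => mul_le_mul_of_nonneg_left ?_ (hd l)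
        refine le_trans ?_ (hload l)
        refine Finset.sum_le_sum_of_subset_of_nonneg (Finset.subset_univ I)
          fun j _ _ => Finset.sum_nonneg fun R _ => hw0 j R
    _ = ∑ l, d l := by simp
end

section
/- If n − i < k, then the maximum of Σ_{j=1}^k λ_j over all achievable request vectors λ ∈ S_i(n,k) equals i; that is, every λ ∈ S_i(n,k) satisfies Σ_{j=1}^k λ_j ≤ i, and the vector λ = (1,…,1,0,…,0) with i ones followed by k−i zeros belongs to S_i(n,k) and attains this sum with equality. -/
open Matrix

/-! Every recovery set of `Gmat M i` contains one of the `i` systematic columns: a set of parity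
columns alone has at most `n - i < k` elements, so together with the systematic column `e_j` it is
still a set of at most `k` columns of the MDS matrix `M`, hence linearly independent. Thus the
systematic servers meet every recovery set, and their total capacity `i` bounds the total rate.
Conversely, each object `j < i` is served at rate one by its own systematic column. -/

open Finset

section ServiceRegion

variable {F : Type*} [Field F] {k n : ℕ} {G : Matrix (Fin k) (Fin n) F}

theorem isRecoverySet_singleton {j : Fin k} {l : Fin n} (hl : Gᵀ l = Pi.single j 1) :
    IsRecoverySet G j {l} := by
  refine ⟨hl ▸ Submodule.subset_span ⟨l, by simp, rfl⟩, fun S hS => ?_⟩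
  simp only [ssubset_singleton_iff.mp hS, coe_empty, Set.image_empty (f := (Gᵀ : Fin n → Fin k → F)),
    Submodule.span_empty, Submodule.mem_bot]
  exact Pi.single_ne_zero_iff.mpr one_ne_zero

theorem sum_le_card_of_forall_isRecoverySet {T : Finset (Fin n)}
    (hT : ∀ j R, IsRecoverySet G j R → ∃ l ∈ T, l ∈ R) {lam : Fin k → ℝ}
    (hlam : lam ∈ ServiceRegion G) : ∑ j, lam j ≤ #T := by
  obtain ⟨-, w, hw_nonneg, hw_rec, hw_sum, hw_load⟩ := hlam
  have hw_le (j : Fin k) (R : Finset (Fin n)) :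
      w j R ≤ ∑ l ∈ T, if l ∈ R then w j R else 0 := by
    by_cases hR : IsRecoverySet G j R
    · obtain ⟨l, hlT, hlR⟩ := hT j R hR
      simpa [hlR] using single_le_sum (f := fun l => if l ∈ R then w j R else 0)
        (fun l _ => by split_ifs <;> simp [hw_nonneg j R]) hlT
    · simp [hw_rec j R hR]
  calc ∑ j, lam j = ∑ j, ∑ R, w j R := by simp only [hw_sum]
    _ ≤ ∑ j, ∑ R, ∑ l ∈ T, if l ∈ R then w j R else 0 :=
        sum_le_sum fun j _ => sum_le_sum fun R _ => hw_le j R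
    _ = ∑ j, ∑ l ∈ T, ∑ R, if l ∈ R then w j R else 0 := sum_congr rfl fun j _ => sum_comm
    _ = ∑ l ∈ T, ∑ j, ∑ R ∈ univ.filter (fun R : Finset (Fin n) => l ∈ R), w j R := by
        rw [sum_comm]
        simp only [sum_filter]
    _ ≤ ∑ l ∈ T, (1 : ℝ) := sum_le_sum fun l _ => hw_load l
    _ = #T := by simp

theorem indicator_mem_serviceRegion {p : Fin k → Prop} [DecidablePred p] {σ : Fin k → Fin n}
    (hσ : Function.Injective σ) (hrec : ∀ j, p j → IsRecoverySet G j {σ j}) :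
    (fun j => if p j then (1 : ℝ) else 0) ∈ ServiceRegion G := by
  refine ⟨fun j => ite_nonneg zero_le_one le_rfl,
    fun j R => if p j ∧ R = {σ j} then 1 else 0, fun j R => ite_nonneg zero_le_one le_rfl,
    fun j R hR => if_neg fun ⟨hj, hRj⟩ => hR (hRj ▸ hrec j hj), fun j => ?_, fun l => ?_⟩
  · by_cases hj : p j <;> simp [hj]
  · have hload (j : Fin k) : ∑ R ∈ univ.filter (fun R : Finset (Fin n) => l ∈ R),
        (if p j ∧ R = {σ j} then (1 : ℝ) else 0) = if p j ∧ σ j = l then 1 else 0 := by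
      by_cases hj : p j <;> simp [hj, eq_comm]
    calc _ = ∑ j, if p j ∧ σ j = l then (1 : ℝ) else 0 := sum_congr rfl fun j _ => hload j
      _ ≤ ∑ j, if σ j = l then (1 : ℝ) else 0 :=
          sum_le_sum fun j _ => by split_ifs <;> simp_all
      _ = #{j | σ j = l} := by rw [sum_boole]
      _ ≤ 1 := by
          have h : #{j | σ j = l} ≤ 1 := card_le_one.mpr fun a ha b hb => by
            simp only [mem_filter, mem_univ, true_and] at ha hb
            exact hσ (ha.trans hb.symm)
          exact_mod_cast h

end ServiceRegion

section MDS

variable {ι K V : Type*} [Fintype ι] [DivisionRing K] [AddCommGroup V] [Module K V] {v : ι → V}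
  {k : ℕ}

theorem linearIndepOn_of_card_le_s4 (hv : ∀ S : Finset ι, #S = k → LinearIndepOn K v S)
    (hk : k ≤ Fintype.card ι) {T : Finset ι} (hT : #T ≤ k) : LinearIndepOn K v T := by
  obtain ⟨S, hTS, hS⟩ := exists_superset_card_eq hT hk
  exact (hv S hS).mono (coe_subset.mpr hTS)

theorem notMem_span_image_of_card_lt_s4 (hv : ∀ S : Finset ι, #S = k → LinearIndepOn K v S)
    (hk : k ≤ Fintype.card ι) {T : Finset ι} (hT : #T < k) {c : ι} (hc : c ∉ T) :
    v c ∉ Submodule.span K (v '' T) := by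
  classical
  have h := linearIndepOn_of_card_le_s4 hv hk ((card_insert_le c T).trans hT)
  rw [coe_insert, linearIndepOn_insert (mem_coe.not.mpr hc)] at h
  exact h.2

end MDS

section Gmat

variable {F : Type*} [Field F] {k n : ℕ} (M : Matrix (Fin k) (Fin (k + n)) F) {i : ℕ}

theorem transpose_castAdd_eq_single
    (hsys : ∀ j : Fin k, ∀ r : Fin k, M r (Fin.castAdd n j) = if r = j then (1 : F) else 0)
    (j : Fin k) : Mᵀ (Fin.castAdd n j) = Pi.single j 1 := by
  ext r
  simp [hsys j r, Pi.single_apply]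

theorem Gmat_transpose_of_lt {l : Fin n} (hl : (l : ℕ) < i) :
    (Gmat M i)ᵀ l = Mᵀ ⟨l, by omega⟩ := by
  ext r
  simp [Gmat, hl]

theorem Gmat_transpose_of_le {l : Fin n} (hl : i ≤ (l : ℕ)) :
    (Gmat M i)ᵀ l = Mᵀ (Fin.natAdd k l) := by
  ext r
  simp [Gmat, Fin.natAdd, not_lt.mpr hl]

theorem Gmat_transpose_castLE_of_lt
    (hsys : ∀ j : Fin k, ∀ r : Fin k, M r (Fin.castAdd n j) = if r = j then (1 : F) else 0)
    (hkn : k ≤ n) {j : Fin k} (hj : (j : ℕ) < i) :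
    (Gmat M i)ᵀ (Fin.castLE hkn j) = Pi.single j 1 :=
  (Gmat_transpose_of_lt M hj).trans (transpose_castAdd_eq_single M hsys j)

theorem exists_lt_mem_of_isRecoverySet_Gmat
    (hsys : ∀ j : Fin k, ∀ r : Fin k, M r (Fin.castAdd n j) = if r = j then (1 : F) else 0)
    (hMDS : ∀ S : Finset (Fin (k + n)), #S = k →
      LinearIndependent F (fun l : S => Mᵀ (l : Fin (k + n))))
    (hni : n - i < k) {j : Fin k} {R : Finset (Fin n)} (hR : IsRecoverySet (Gmat M i) j R) :
    ∃ l ∈ R, (l : ℕ) < i := by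
  by_contra! hparity
  have himage : (Gmat M i)ᵀ '' R = Mᵀ '' (R.map (Fin.natAddEmb k) : Finset (Fin (k + n))) := by
    rw [coe_map, Set.image_image (g := (Mᵀ : Fin (k + n) → Fin k → F))]
    exact Set.image_congr fun l hl => Gmat_transpose_of_le M (hparity l hl)
  have hcard : #(R.map (Fin.natAddEmb k)) < k := by
    rw [card_map]
    calc #R ≤ #(Ico i n) := card_le_card_of_injOn Fin.val
            (fun l hl => mem_Ico.mpr ⟨hparity l hl, l.isLt⟩) Fin.val_injective.injOn
      _ = n - i := Nat.card_Ico i n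
      _ < k := hni
  have hj : Fin.castAdd n j ∉ R.map (Fin.natAddEmb k) := by
    simp only [mem_map, Fin.natAddEmb_apply, not_exists, not_and, Fin.ext_iff, Fin.val_natAdd,
      Fin.val_castAdd]
    omega
  refine notMem_span_image_of_card_lt_s4 hMDS (by simp) hcard hj ?_
  rw [transpose_castAdd_eq_single M hsys, ← himage]
  exact hR.1

end Gmat

theorem maximal_matching_simplex_small_n_general
    {F : Type*} [Field F] {k n : ℕ} (hkn : k ≤ n)
    (M : Matrix (Fin k) (Fin (k + n)) F)
    (hsys : ∀ j : Fin k, ∀ r : Fin k, M r (Fin.castAdd n j) = if r = j then (1 : F) else 0)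
    (hMDS : ∀ S : Finset (Fin (k + n)), S.card = k →
      LinearIndependent F (fun l : S => Mᵀ (l : Fin (k + n))))
    (i : ℕ) (hik : i ≤ k) (hni : n - i < k) :
    (∀ lam ∈ ServiceRegion (Gmat M i), ∑ j, lam j ≤ (i : ℝ)) ∧
      (fun j : Fin k => if (j : ℕ) < i then (1 : ℝ) else 0) ∈ ServiceRegion (Gmat M i) ∧
      ∑ j : Fin k, (if (j : ℕ) < i then (1 : ℝ) else 0) = (i : ℝ) := by
  have hcard (m : ℕ) (him : i ≤ m) : #{l : Fin m | (l : ℕ) < i} = i := by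
    rw [Fin.card_filter_val_lt, min_eq_right him]
  refine ⟨fun lam hlam => ?_, ?_, ?_⟩
  · calc ∑ j, lam j ≤ #{l : Fin n | (l : ℕ) < i} :=
          sum_le_card_of_forall_isRecoverySet (fun j R hR => by
            obtain ⟨l, hlR, hli⟩ := exists_lt_mem_of_isRecoverySet_Gmat M hsys hMDS hni hR
            exact ⟨l, by simpa using hli, hlR⟩) hlam
      _ = i := by rw [hcard n (hik.trans hkn)]
  · exact indicator_mem_serviceRegion (Fin.castLE_injective hkn)
      fun j hj => isRecoverySet_singleton (Gmat_transpose_castLE_of_lt M hsys hkn hj)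
  · rw [sum_boole, hcard k hik]

theorem maximal_matching_simplex_small_n
    {F : Type*} [Field F] [Fintype F] {k n : ℕ} (hk : 2 ≤ k) (hkn : k ≤ n)
    (hq : k + n + 1 ≤ Fintype.card F)
    (M : Matrix (Fin k) (Fin (k + n)) F)
    (hsys : ∀ j : Fin k, ∀ r : Fin k, M r (Fin.castAdd n j) = if r = j then (1 : F) else 0)
    (hMDS : ∀ S : Finset (Fin (k + n)), S.card = k →
      LinearIndependent F (fun l : S => Mᵀ (l : Fin (k + n))))
    (i : ℕ) (hik : i ≤ k) (hni : n - i < k) :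
    (∀ lam ∈ ServiceRegion (Gmat M i), ∑ j, lam j ≤ (i : ℝ)) ∧
      (fun j : Fin k => if (j : ℕ) < i then (1 : ℝ) else 0) ∈ ServiceRegion (Gmat M i) ∧
      ∑ j : Fin k, (if (j : ℕ) < i then (1 : ℝ) else 0) = (i : ℝ) :=
  maximal_matching_simplex_small_n_general hkn M hsys hMDS i hik hni
end

section
/- For the single-parity-check system G_k(k+1,k) (all k systematic columns plus one parity column), every achievable request vector λ ∈ S_k(k+1,k) satisfies λ_i + λ_j ≤ 2 for all distinct i, j ∈ [k]. -/
open Matrix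

section SPCAux
open Finset

variable {F : Type*} [Field F] {k : ℕ}

lemma parity_ne_zero (hk : 2 ≤ k)
    (M : Matrix (Fin k) (Fin (k + (k + 1))) F)
    (hsys : ∀ j : Fin k, ∀ r : Fin k,
      M r (Fin.castAdd (k + 1) j) = if r = j then (1 : F) else 0)
    (hMDS : ∀ S : Finset (Fin (k + (k + 1))), S.card = k →
      LinearIndependent F (fun l : S => Mᵀ (l : Fin (k + (k + 1)))))
    (r : Fin k) : M r ⟨k + k, by omega⟩ ≠ 0 := by
  intro hr0
  set p : Fin (k + (k + 1)) := ⟨k + k, by omega⟩ with hp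
  set T : Finset (Fin (k + (k + 1))) :=
    (Finset.univ.erase r).image (Fin.castAdd (k + 1)) with hT
  have hinj : Function.Injective (Fin.castAdd (k + 1) : Fin k → Fin (k + (k + 1))) := by
    intro x y hxy
    have := congrArg Fin.val hxy
    simpa [Fin.castAdd, Fin.castLE, Fin.ext_iff] using this
  have hpT : p ∉ T := by
    simp only [hT, Finset.mem_image]
    rintro ⟨j, -, hj⟩
    have := congrArg Fin.val hj
    simp [hp, Fin.castAdd, Fin.castLE] at this
    omega
  set S : Finset (Fin (k + (k + 1))) := insert p T with hS
  have hcard : S.card = k := by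
    rw [hS, Finset.card_insert_of_notMem hpT, hT,
      Finset.card_image_of_injective _ hinj, Finset.card_erase_of_mem (Finset.mem_univ r)]
    simp [Finset.card_univ]
    omega
  have hLI := hMDS S hcard
  have hpS : p ∈ S := Finset.mem_insert_self _ _
  set ip : ↥S := ⟨p, hpS⟩ with hip
  have hnot := hLI.notMem_span_image (s := {x : ↥S | x ≠ ip}) (x := ip) (by simp)
  apply hnot
  have heq : Mᵀ p = ∑ j ∈ Finset.univ.erase r, (M j p) • Mᵀ (Fin.castAdd (k + 1) j) := by
    funext r'
    simp only [Finset.sum_apply, Pi.smul_apply, smul_eq_mul, Matrix.transpose_apply, hsys]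
    by_cases hr' : r' = r
    · subst hr'
      rw [Finset.sum_eq_zero]
      · exact hr0
      · intro j hj
        rw [if_neg (fun h => (Finset.ne_of_mem_erase hj) h.symm), mul_zero]
    · rw [Finset.sum_eq_single r']
      · simp
      · intro j hj hne
        simp [Ne.symm hne]
      · intro h
        exact absurd (Finset.mem_erase.mpr ⟨hr', Finset.mem_univ _⟩) h
  show Mᵀ p ∈ Submodule.span F ((fun l : ↥S => Mᵀ (l : Fin (k + (k+1)))) '' {x | x ≠ ip})
  rw [heq]
  apply Submodule.sum_mem
  intro j hj
  apply Submodule.smul_mem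
  have hmem : Fin.castAdd (k + 1) j ∈ S := by
    rw [hS]
    exact Finset.mem_insert_of_mem (Finset.mem_image_of_mem _ hj)
  have hne : (⟨Fin.castAdd (k + 1) j, hmem⟩ : ↥S) ≠ ip := by
    intro h
    have := congrArg (Fin.val ∘ Subtype.val) h
    simp [hip, hp, Fin.castAdd, Fin.castLE] at this
    omega
  exact Submodule.subset_span ⟨⟨Fin.castAdd (k + 1) j, hmem⟩, hne, rfl⟩


variable {F : Type*} [Field F] {k : ℕ}

lemma recovery_mem (hk : 2 ≤ k)
    (M : Matrix (Fin k) (Fin (k + (k + 1))) F)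
    (hsys : ∀ j : Fin k, ∀ r : Fin k,
      M r (Fin.castAdd (k + 1) j) = if r = j then (1 : F) else 0)
    (hP : ∀ r : Fin k, M r ⟨k + k, by omega⟩ ≠ 0)
    (x y : Fin k) (hxy : x ≠ y) (R : Finset (Fin (k + 1)))
    (hrec : (Pi.single x 1 : Fin k → F) ∈
      Submodule.span F ((Gmat M k)ᵀ '' (R : Set (Fin (k + 1))))) :
    (⟨x.val, by omega⟩ : Fin (k + 1)) ∈ R ∨ (⟨y.val, by omega⟩ : Fin (k + 1)) ∈ R := by
  by_contra hcon
  push_neg at hcon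
  obtain ⟨hx, hy⟩ := hcon
  set P : Fin k → F := fun r => M r ⟨k + k, by omega⟩ with hPdef
  set φ : (Fin k → F) →ₗ[F] F :=
    P x • (LinearMap.proj y : (Fin k → F) →ₗ[F] F)
      - P y • (LinearMap.proj x : (Fin k → F) →ₗ[F] F) with hφ
  have hφapp : ∀ v : Fin k → F, φ v = P x * v y - P y * v x := by
    intro v
    simp [hφ, smul_eq_mul]
  have hsub : Submodule.span F ((Gmat M k)ᵀ '' (R : Set (Fin (k + 1)))) ≤ LinearMap.ker φ := by
    rw [Submodule.span_le]
    rintro _ ⟨l, hl, rfl⟩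
    rw [SetLike.mem_coe, LinearMap.mem_ker, hφapp]
    by_cases hlk : (l : ℕ) < k
    · set j : Fin k := ⟨(l : ℕ), hlk⟩ with hj
      have hcol : ∀ r : Fin k, (Gmat M k)ᵀ l r = if r = j then (1 : F) else 0 := by
        intro r
        have : (⟨(l : ℕ), by omega⟩ : Fin (k + (k + 1))) = Fin.castAdd (k + 1) j := rfl
        simp only [Matrix.transpose_apply, Gmat, Matrix.of_apply, if_pos hlk, this, hsys]
      have hjx : j ≠ x := by
        intro h
        apply hx
        have : l = (⟨x.val, by omega⟩ : Fin (k + 1)) := by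
          apply Fin.ext
          simp [← h, hj]
        rwa [← this]
      have hjy : j ≠ y := by
        intro h
        apply hy
        have : l = (⟨y.val, by omega⟩ : Fin (k + 1)) := by
          apply Fin.ext
          simp [← h, hj]
        rwa [← this]
      rw [hcol, hcol, if_neg (Ne.symm hjy), if_neg (Ne.symm hjx)]
      ring
    · have hlval : (l : ℕ) = k := by have := l.isLt; omega
      have hcol : ∀ r : Fin k, (Gmat M k)ᵀ l r = P r := by
        intro r
        have : (⟨k + (l : ℕ), by have := l.isLt; omega⟩ : Fin (k + (k + 1)))
            = (⟨k + k, by omega⟩ : Fin (k + (k + 1))) := by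
          apply Fin.ext; simp [hlval]
        simp only [Matrix.transpose_apply, Gmat, Matrix.of_apply, if_neg hlk, this, hPdef]
      rw [hcol, hcol]
      ring
  have := hsub hrec
  rw [LinearMap.mem_ker, hφapp] at this
  rw [Pi.single_apply, Pi.single_apply, if_neg (Ne.symm hxy), if_pos rfl] at this
  simp at this
  exact hP y this

end SPCAux

set_option maxHeartbeats 1000000 in
theorem spc_pairwise_bound
    {F : Type*} [Field F] [Fintype F] {k : ℕ} (hk : 2 ≤ k)
    (hq : k + (k + 1) + 1 ≤ Fintype.card F)
    (M : Matrix (Fin k) (Fin (k + (k + 1))) F)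
    (hsys : ∀ j : Fin k, ∀ r : Fin k,
      M r (Fin.castAdd (k + 1) j) = if r = j then (1 : F) else 0)
    (hMDS : ∀ S : Finset (Fin (k + (k + 1))), S.card = k →
      LinearIndependent F (fun l : S => Mᵀ (l : Fin (k + (k + 1)))))
    (lam : Fin k → ℝ)
    (hlam : lam ∈ ServiceRegion (Gmat M k : Matrix (Fin k) (Fin (k + 1)) F))
    (a b : Fin k) (hab : a ≠ b) :
    lam a + lam b ≤ 2 := by
  obtain ⟨hnn, w, hw0, hwrec, hwsum, hwcap⟩ := hlam
  have hP : ∀ r : Fin k, M r ⟨k + k, by omega⟩ ≠ 0 := parity_ne_zero hk M hsys hMDS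
  set ia : Fin (k + 1) := ⟨a.val, by omega⟩ with hia
  set ib : Fin (k + 1) := ⟨b.val, by omega⟩ with hib
  have keya : ∀ R : Finset (Fin (k + 1)), w a R ≠ 0 → ia ∈ R ∨ ib ∈ R := by
    intro R hw
    have hrecR : IsRecoverySet (Gmat M k) a R := by
      by_contra h; exact hw (hwrec a R h)
    exact recovery_mem hk M hsys hP a b hab R hrecR.1
  have keyb : ∀ R : Finset (Fin (k + 1)), w b R ≠ 0 → ia ∈ R ∨ ib ∈ R := by
    intro R hw
    have hrecR : IsRecoverySet (Gmat M k) b R := by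
      by_contra h; exact hw (hwrec b R h)
    exact (recovery_mem hk M hsys hP b a (Ne.symm hab) R hrecR.1).symm
  set A := Finset.univ.filter (fun R : Finset (Fin (k + 1)) => ia ∈ R) with hA
  set B := Finset.univ.filter (fun R : Finset (Fin (k + 1)) => ib ∈ R) with hB
  have hbound : ∀ j : Fin k, (∀ R, w j R ≠ 0 → ia ∈ R ∨ ib ∈ R) →
      lam j ≤ ∑ R ∈ A, w j R + ∑ R ∈ B, w j R := by
    intro j hkey
    have h1 : lam j = ∑ R ∈ A ∪ (B \ A), w j R := by
      rw [← hwsum j]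
      refine (Finset.sum_subset (Finset.subset_univ _) ?_).symm
      intro R _ hR
      by_contra hw
      rcases hkey R hw with h | h
      · exact hR (Finset.mem_union_left _ (Finset.mem_filter.mpr ⟨Finset.mem_univ _, h⟩))
      · by_cases hAm : R ∈ A
        · exact hR (Finset.mem_union_left _ hAm)
        · exact hR (Finset.mem_union_right _ (Finset.mem_sdiff.mpr
            ⟨Finset.mem_filter.mpr ⟨Finset.mem_univ _, h⟩, hAm⟩))
    rw [h1, Finset.sum_union Finset.sdiff_disjoint.symm]
    have h2 : ∑ R ∈ B \ A, w j R ≤ ∑ R ∈ B, w j R :=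
      Finset.sum_le_sum_of_subset_of_nonneg Finset.sdiff_subset (fun R _ _ => hw0 j R)
    linarith
  have hcapA : ∑ R ∈ A, w a R + ∑ R ∈ A, w b R ≤ 1 := by
    calc ∑ R ∈ A, w a R + ∑ R ∈ A, w b R
        = ∑ j ∈ ({a, b} : Finset (Fin k)), ∑ R ∈ A, w j R := (Finset.sum_pair (f := fun j => ∑ R ∈ A, w j R) hab).symm
      _ ≤ ∑ j : Fin k, ∑ R ∈ A, w j R := Finset.sum_le_sum_of_subset_of_nonneg
            (Finset.subset_univ _) (fun j _ _ => Finset.sum_nonneg fun R _ => hw0 j R)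
      _ ≤ 1 := by rw [hA]; exact hwcap ia
  have hcapB : ∑ R ∈ B, w a R + ∑ R ∈ B, w b R ≤ 1 := by
    calc ∑ R ∈ B, w a R + ∑ R ∈ B, w b R
        = ∑ j ∈ ({a, b} : Finset (Fin k)), ∑ R ∈ B, w j R := (Finset.sum_pair (f := fun j => ∑ R ∈ B, w j R) hab).symm
      _ ≤ ∑ j : Fin k, ∑ R ∈ B, w j R := Finset.sum_le_sum_of_subset_of_nonneg
            (Finset.subset_univ _) (fun j _ _ => Finset.sum_nonneg fun R _ => hw0 j R)
      _ ≤ 1 := by rw [hB]; exact hwcap ib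
  have Ha := hbound a keya
  have Hb := hbound b keyb
  linarith
end

section
/- Characterization of the service rate region of the single-parity-check system: a nonnegative vector λ = (λ_1,…,λ_k) belongs to S_k(k+1,k) if and only if λ_i + λ_j ≤ 2 for all distinct i, j ∈ [k], and for every subset A ⊆ [k], k·Σ_{j∈A}(λ_j − 1) + Σ_{j∈[k]\A} λ_j ≤ k + 1 − |A|. -/
/-!
The parity column `p` of `G = [I | p]` has no zero entry (an MDS consequence), so a recovery set
for `e_j` that avoids the systematic node `j` must contain every other node: a functional
vanishing on the columns it uses but not on `e_j` exists as soon as one node is missing. Hence an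
allocation is described by the rate `y_j` that object `j` sends through `[k+1] \ {j}`, and the
server loads read `∑ y ≤ 1` (parity node) and `λ_i - y_i + ∑_{j ≠ i} y_j ≤ 1` (node `i`).
Eliminating `y` gives `λ_a + λ_b ≤ 2` and the subset inequalities. Conversely, under the pairwise
bounds at most one object has rate above `1`, and sending exactly its excess through the parity
node is feasible; in particular the subset inequalities follow from the pairwise ones.
-/

open Matrix

open Finset

theorem exists_apply_ne_zero_of_linearIndependent {F ι : Type*} [Field F] [Fintype ι] {k : ℕ}
    {v : ι → Fin k → F} (hv : LinearIndependent F v) (hcard : Fintype.card ι = k) (r : Fin k) :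
    ∃ i, v i r ≠ 0 := by
  by_contra! h
  have hspan : Submodule.span F (Set.range v) ≤ LinearMap.ker (LinearMap.proj r) :=
    Submodule.span_le.mpr (by rintro _ ⟨i, rfl⟩; exact h i)
  rw [hv.span_eq_top_of_card_eq_finrank' (by simpa using hcard)] at hspan
  simpa using hspan (Submodule.mem_top (x := Pi.single r 1))

section Allocation

variable {F : Type*} [Field F] {k n : ℕ} {G : Matrix (Fin k) (Fin n) F}

theorem IsValidAllocation.sum_sum_le_one {lam : Fin k → ℝ} {w : Fin k → Finset (Fin n) → ℝ}
    (hw : IsValidAllocation G lam w) (l : Fin n) (S : Fin k → Finset (Finset (Fin n)))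
    (hS : ∀ j, ∀ R ∈ S j, IsRecoverySet G j R → l ∈ R) :
    ∑ j, ∑ R ∈ S j, w j R ≤ 1 := by
  classical
  obtain ⟨hw0, hwsupp, -, hload⟩ := hw
  refine le_trans (sum_le_sum fun j _ => ?_) (hload l)
  calc ∑ R ∈ S j, w j R = ∑ R ∈ (S j).filter (IsRecoverySet G j), w j R :=
        (sum_filter_of_ne fun R _ h => by_contra fun hR => h (hwsupp j R hR)).symm
    _ ≤ ∑ R ∈ univ.filter (fun R => l ∈ R), w j R :=
        sum_le_sum_of_subset_of_nonneg
          (fun R hR => by simp only [mem_filter] at hR ⊢; exact ⟨mem_univ R, hS j R hR.1 hR.2⟩)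
          (fun R _ _ => hw0 j R)

theorem isValidAllocation_of_two_sets {A B : Fin k → Finset (Fin n)} {a b : Fin k → ℝ}
    (hA : ∀ j, IsRecoverySet G j (A j)) (hB : ∀ j, IsRecoverySet G j (B j))
    (ha : ∀ j, 0 ≤ a j) (hb : ∀ j, 0 ≤ b j)
    (hload : ∀ l, ∑ j, ((if l ∈ A j then a j else 0) + (if l ∈ B j then b j else 0)) ≤ 1) :
    IsValidAllocation G (a + b)
      (fun j R => (if R = A j then a j else 0) + (if R = B j then b j else 0)) := by
  classical
  refine ⟨fun j R => ?_, fun j R hR => ?_, fun j => ?_, fun l => ?_⟩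
  · exact add_nonneg (by split_ifs <;> simp [ha]) (by split_ifs <;> simp [hb])
  · have hRA : R ≠ A j := by rintro rfl; exact hR (hA j)
    have hRB : R ≠ B j := by rintro rfl; exact hR (hB j)
    simp [hRA, hRB]
  · simp [sum_add_distrib]
  · simpa [sum_add_distrib, sum_ite_eq'] using hload l

end Allocation

/-- `y j` is the rate of object `j` served by the recovery set `[k+1] \ {j}`; the rest,
`lam j - y j`, is served by the systematic node `j`. -/
def IsParitySplit {k : ℕ} (lam y : Fin k → ℝ) : Prop :=
  (∀ j, 0 ≤ y j ∧ y j ≤ lam j) ∧ ∑ j, y j ≤ 1 ∧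
    ∀ i, lam i - y i + ∑ j ∈ univ.erase i, y j ≤ 1

namespace IsParitySplit

variable {k : ℕ} {lam y : Fin k → ℝ}

theorem le_one_add_two_mul_sub_sum (h : IsParitySplit lam y) (i : Fin k) :
    lam i ≤ 1 + 2 * y i - ∑ j, y j := by
  have := h.2.2 i
  rw [sum_erase_eq_sub (mem_univ i)] at this
  linarith

theorem add_le_two (h : IsParitySplit lam y) {a b : Fin k} (hab : a ≠ b) :
    lam a + lam b ≤ 2 := by
  have hpair : y a + y b ≤ ∑ j, y j := by
    rw [← sum_pair hab]
    exact sum_le_sum_of_subset_of_nonneg (subset_univ _) fun j _ _ => (h.1 j).1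
  linarith [h.le_one_add_two_mul_sub_sum a, h.le_one_add_two_mul_sub_sum b]

theorem card_mul_sum_sub_one_add_sum_compl_le (h : IsParitySplit lam y) (hk : 2 ≤ k)
    (A : Finset (Fin k)) :
    (k : ℝ) * (∑ j ∈ A, (lam j - 1)) + ∑ j ∈ Aᶜ, lam j ≤ (k : ℝ) + 1 - (A.card : ℝ) := by
  set Y := ∑ j, y j
  have hY0 : 0 ≤ Y := sum_nonneg fun j _ => (h.1 j).1
  have hsA : 0 ≤ ∑ j ∈ A, y j := sum_nonneg fun j _ => (h.1 j).1
  have hsC : 0 ≤ ∑ j ∈ Aᶜ, y j := sum_nonneg fun j _ => (h.1 j).1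
  have hsplit : ∑ j ∈ A, y j + ∑ j ∈ Aᶜ, y j = Y := sum_add_sum_compl A y
  have hcard : (Aᶜ.card : ℝ) = k - A.card := by
    rw [card_compl, Fintype.card_fin, Nat.cast_sub (by simpa using card_le_univ A)]
  have hkR : (2 : ℝ) ≤ k := by exact_mod_cast hk
  have hA : ∑ j ∈ A, (lam j - 1) ≤ 2 * ∑ j ∈ A, y j - A.card * Y := by
    calc ∑ j ∈ A, (lam j - 1) ≤ ∑ j ∈ A, (2 * y j - Y) :=
          sum_le_sum fun j _ => by linarith [h.le_one_add_two_mul_sub_sum j]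
      _ = _ := by rw [sum_sub_distrib, ← mul_sum, sum_const, nsmul_eq_mul]
  have hAc : ∑ j ∈ Aᶜ, lam j ≤ (k - A.card) * (1 - Y) + 2 * ∑ j ∈ Aᶜ, y j := by
    calc ∑ j ∈ Aᶜ, lam j ≤ ∑ j ∈ Aᶜ, ((1 - Y) + 2 * y j) :=
          sum_le_sum fun j _ => by linarith [h.le_one_add_two_mul_sub_sum j]
      _ = _ := by rw [sum_add_distrib, ← mul_sum, sum_const, nsmul_eq_mul, hcard]
  have hkA := mul_le_mul_of_nonneg_left hA (by linarith : (0 : ℝ) ≤ k)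
  rcases A.eq_empty_or_nonempty with rfl | hne
  · simp only [sum_empty, card_empty, Nat.cast_zero] at hkA hsplit hAc ⊢
    nlinarith [mul_nonneg (by linarith : (0 : ℝ) ≤ k - 2) hY0]
  · have ha : (1 : ℝ) ≤ A.card := by exact_mod_cast hne.card_pos
    nlinarith [mul_nonneg (mul_nonneg (by linarith : (0 : ℝ) ≤ A.card - 1)
      (by linarith : (0 : ℝ) ≤ k - 1)) hY0,
      mul_nonneg (by linarith : (0 : ℝ) ≤ k - 1) hsC, h.2.1]

end IsParitySplit

theorem isParitySplit_of_add_le_two {k : ℕ} (hk : 2 ≤ k) {lam : Fin k → ℝ}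
    (hlam0 : ∀ j, 0 ≤ lam j) (hpair : ∀ a b : Fin k, a ≠ b → lam a + lam b ≤ 2) :
    IsParitySplit lam fun j => max (lam j - 1) 0 := by
  set y : Fin k → ℝ := fun j => max (lam j - 1) 0
  have hy_eq_zero : ∀ j, lam j ≤ 1 → y j = 0 := fun j hj => max_eq_right (by linarith)
  have hle_two : ∀ i, lam i ≤ 2 := fun i => by
    have : Nontrivial (Fin k) := Fin.nontrivial_iff_two_le.mpr hk
    obtain ⟨s, hs⟩ := exists_ne i
    linarith [hpair i s hs.symm, hlam0 s]
  have hnode : ∀ i, lam i - y i + ∑ j ∈ univ.erase i, y j ≤ 1 := fun i => by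
    by_cases hbig : ∃ t ≠ i, 1 < lam t
    · obtain ⟨t, hti, ht⟩ := hbig
      have hsmall : ∀ j ≠ t, lam j ≤ 1 := fun j hjt => by linarith [hpair j t hjt]
      rw [sum_eq_single_of_mem t (mem_erase.mpr ⟨hti, mem_univ t⟩)
        fun j _ hjt => hy_eq_zero j (hsmall j hjt), hy_eq_zero i (hsmall i hti.symm),
        show y t = lam t - 1 from max_eq_left (by linarith)]
      linarith [hpair i t hti.symm]
    · push Not at hbig
      rw [sum_eq_zero fun j hj => hy_eq_zero j (hbig j (ne_of_mem_erase hj))]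
      have : lam i - 1 ≤ y i := le_max_left _ _
      linarith
  refine ⟨fun j => ⟨le_max_right _ _, max_le (by linarith) (hlam0 j)⟩, ?_, hnode⟩
  obtain ⟨i⟩ : Nonempty (Fin k) := ⟨⟨0, by omega⟩⟩
  have : 2 * y i ≤ lam i := by
    rcases le_total (lam i) 1 with h | h
    · linarith [hy_eq_zero i h, hlam0 i]
    · linarith [show y i = lam i - 1 from max_eq_left (by linarith), hle_two i]
  rw [← add_sum_erase univ y (mem_univ i)]
  linarith [hnode i]

structure IsSingleParityCheck {F : Type*} [Field F] {k : ℕ}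
    (G : Matrix (Fin k) (Fin (k + 1)) F) : Prop where
  transpose_castSucc : ∀ i, Gᵀ i.castSucc = Pi.single i 1
  apply_last_ne_zero : ∀ r, G r (Fin.last k) ≠ 0

namespace IsSingleParityCheck

variable {F : Type*} [Field F] {k : ℕ} {G : Matrix (Fin k) (Fin (k + 1)) F}

theorem isRecoverySet_singleton (hG : IsSingleParityCheck G) (j : Fin k) :
    IsRecoverySet G j {j.castSucc} := by
  refine ⟨Submodule.subset_span ⟨j.castSucc, by simp, hG.transpose_castSucc j⟩, fun S hS => ?_⟩
  rw [Finset.ssubset_singleton_iff.mp hS]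
  simp [Set.image_empty (f := (Gᵀ : Fin (k + 1) → Fin k → F))]

theorem compl_subset_of_mem_span (hG : IsSingleParityCheck G) {j : Fin k}
    {R : Finset (Fin (k + 1))} (hjR : j.castSucc ∉ R)
    (hmem : (Pi.single j 1 : Fin k → F) ∈ Submodule.span F (Gᵀ '' (R : Set (Fin (k + 1))))) :
    {j.castSucc}ᶜ ⊆ R := by
  -- With `p` the parity column: if the parity node is missing, `x ↦ x j` separates `e_j` from
  -- the span; if node `i` is missing, `x ↦ p i * x j - p j * x i` does.
  have vanish : ∀ φ : Module.Dual F (Fin k → F), (∀ l ∈ R, φ (Gᵀ l) = 0) →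
      φ (Pi.single j 1) = 0 := fun φ hφ => by
    have hle : Submodule.span F (Gᵀ '' (R : Set (Fin (k + 1)))) ≤ LinearMap.ker φ :=
      Submodule.span_le.mpr (by rintro _ ⟨l, hl, rfl⟩; exact hφ l hl)
    exact hle hmem
  intro m hm
  by_contra hmR
  induction m using Fin.lastCases with
  | last =>
    have := vanish (LinearMap.proj j) fun l hl => by
      induction l using Fin.lastCases with
      | last => exact absurd hl hmR
      | cast i =>
        have hij : i ≠ j := by rintro rfl; exact hjR hl
        simp [hG.transpose_castSucc, hij]
    simp at this
  | cast i =>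
    have hij : i ≠ j := by rintro rfl; simp at hm
    have := vanish (G i (Fin.last k) • LinearMap.proj j - G j (Fin.last k) • LinearMap.proj i)
      fun l hl => by
        induction l using Fin.lastCases with
        | last => simp [mul_comm]
        | cast l =>
          have hlj : l ≠ j := by rintro rfl; exact hjR hl
          have hli : l ≠ i := by rintro rfl; exact hmR hl
          simp [hG.transpose_castSucc, hlj.symm, hli.symm]
    exact hG.apply_last_ne_zero i (by simpa [hij] using this)

theorem isRecoverySet_compl (hG : IsSingleParityCheck G) (j : Fin k) :
    IsRecoverySet G j {j.castSucc}ᶜ := by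
  refine ⟨?_, fun S hS hmem => ?_⟩
  · have hdecomp : G j (Fin.last k) • (Pi.single j 1 : Fin k → F) =
        Gᵀ (Fin.last k) - ∑ i ∈ univ.erase j, G i (Fin.last k) • Pi.single i 1 := by
      rw [eq_sub_iff_add_eq, add_sum_erase univ
        (fun i => G i (Fin.last k) • (Pi.single i 1 : Fin k → F)) (mem_univ j)]
      exact (pi_eq_sum_univ' _).symm
    rw [← Submodule.smul_mem_iff _ (hG.apply_last_ne_zero j), hdecomp]
    refine Submodule.sub_mem _
      (Submodule.subset_span ⟨Fin.last k, by simpa using (Fin.castSucc_ne_last j).symm, rfl⟩)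
      (Submodule.sum_mem _ fun i hi => Submodule.smul_mem _ _
        (Submodule.subset_span ⟨i.castSucc, ?_, hG.transpose_castSucc i⟩))
    simpa using (ne_of_mem_erase hi)
  · have hjS : j.castSucc ∉ S := fun h => by simpa using hS.subset h
    exact hS.not_subset (hG.compl_subset_of_mem_span hjS hmem)

theorem mem_serviceRegion_iff (hG : IsSingleParityCheck G) (lam : Fin k → ℝ) :
    lam ∈ ServiceRegion G ↔ (∀ j, 0 ≤ lam j) ∧ ∃ y, IsParitySplit lam y := by
  constructor
  · rintro ⟨hlam0, w, hw⟩
    classical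
    set x : Fin k → ℝ := fun j => ∑ R ∈ univ.filter (fun R => j.castSucc ∈ R), w j R
    set y : Fin k → ℝ := fun j => ∑ R ∈ univ.filter (fun R => j.castSucc ∉ R), w j R
    have hx0 : ∀ j, 0 ≤ x j := fun j => sum_nonneg fun R _ => hw.1 j R
    have hy0 : ∀ j, 0 ≤ y j := fun j => sum_nonneg fun R _ => hw.1 j R
    have hxy : ∀ j, x j + y j = lam j := fun j =>
      (sum_filter_add_sum_filter_not _ _ _).trans (hw.2.2.1 j)
    have hcompl : ∀ j R, j.castSucc ∉ R → IsRecoverySet G j R → {j.castSucc}ᶜ ⊆ R :=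
      fun j R hjR hR => hG.compl_subset_of_mem_span hjR hR.1
    refine ⟨hlam0, y, fun j => ⟨hy0 j, by linarith [hx0 j, hxy j]⟩, ?_, fun i => ?_⟩
    · refine hw.sum_sum_le_one (Fin.last k) _ fun j R hR hrec => hcompl j R ?_ hrec ?_
      · simpa using hR
      · simpa using (Fin.castSucc_ne_last j).symm
    · have hload := hw.sum_sum_le_one i.castSucc
        (fun j => if j = i then univ.filter (fun R => i.castSucc ∈ R)
          else univ.filter (fun R => j.castSucc ∉ R)) fun j R hR hrec => by
        split_ifs at hR with hji
        · simpa using hR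
        · exact hcompl j R (by simpa using hR) hrec (by simpa using Ne.symm hji)
      rw [← add_sum_erase univ _ (mem_univ i), if_pos rfl,
        sum_congr (s₁ := univ.erase i) (g := y) rfl fun j hj => by
          rw [if_neg (ne_of_mem_erase hj)]] at hload
      linarith [hxy i]
  · rintro ⟨hlam0, y, hy0, hylast, hynode⟩
    refine ⟨hlam0, _, sub_add_cancel lam y ▸ isValidAllocation_of_two_sets
      hG.isRecoverySet_singleton hG.isRecoverySet_compl
      (fun j => sub_nonneg.mpr (hy0 j).2) (fun j => (hy0 j).1) fun l => ?_⟩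
    induction l using Fin.lastCases with
    | last => simpa [fun j : Fin k => (Fin.castSucc_ne_last j).symm] using hylast
    | cast i =>
      simpa [ite_add_ite, sum_ite, filter_eq, filter_ne] using hynode i

end IsSingleParityCheck

theorem isSingleParityCheck_gmat {F : Type*} [Field F] {k : ℕ}
    {M : Matrix (Fin k) (Fin (k + (k + 1))) F}
    (hsys : ∀ j : Fin k, ∀ r : Fin k,
      M r (Fin.castAdd (k + 1) j) = if r = j then (1 : F) else 0)
    (hMDS : ∀ S : Finset (Fin (k + (k + 1))), S.card = k →
      LinearIndependent F (fun l : S => Mᵀ (l : Fin (k + (k + 1))))) :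
    IsSingleParityCheck (Gmat M k : Matrix (Fin k) (Fin (k + 1)) F) := by
  refine ⟨fun i => funext fun r => ?_, fun r => ?_⟩
  · simp only [Matrix.transpose_apply, Gmat, Matrix.of_apply, Fin.val_castSucc, i.isLt, if_true]
    exact (hsys i r).trans (by simp [Pi.single_apply])
  · set p : Fin (k + (k + 1)) := ⟨k + k, by omega⟩
    have hp : p ∉ (univ.erase r).map (Fin.castAddEmb (k + 1)) := by
      simp only [p, mem_map, mem_erase, Fin.ext_iff, Fin.coe_castAddEmb, not_exists, not_and]
      intro x _ hx
      simp only [Fin.val_castAdd] at hx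
      omega
    have hcard : (insert p ((univ.erase r).map (Fin.castAddEmb (k + 1)))).card = k := by
      rw [card_insert_of_notMem hp, card_map, card_erase_of_mem (mem_univ r), card_univ,
        Fintype.card_fin]
      have := r.pos
      omega
    obtain ⟨⟨l, hl⟩, hne⟩ := exists_apply_ne_zero_of_linearIndependent (hMDS _ hcard)
      ((Fintype.card_coe _).trans hcard) r
    rcases mem_insert.mp hl with rfl | hl
    · simpa [Gmat, p] using hne
    · obtain ⟨i, hi, rfl⟩ := mem_map.mp hl
      exact absurd ((hsys i r).trans (if_neg (ne_of_mem_erase hi).symm)) hne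

theorem spc_srr_characterization_general
    {F : Type*} [Field F] {k : ℕ} (hk : 2 ≤ k)
    (M : Matrix (Fin k) (Fin (k + (k + 1))) F)
    (hsys : ∀ j : Fin k, ∀ r : Fin k,
      M r (Fin.castAdd (k + 1) j) = if r = j then (1 : F) else 0)
    (hMDS : ∀ S : Finset (Fin (k + (k + 1))), S.card = k →
      LinearIndependent F (fun l : S => Mᵀ (l : Fin (k + (k + 1)))))
    (lam : Fin k → ℝ) (hlam0 : ∀ j, 0 ≤ lam j) :
    lam ∈ ServiceRegion (Gmat M k : Matrix (Fin k) (Fin (k + 1)) F) ↔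
      ((∀ a b : Fin k, a ≠ b → lam a + lam b ≤ 2) ∧
        ∀ A : Finset (Fin k),
          (k : ℝ) * (∑ j ∈ A, (lam j - 1)) + ∑ j ∈ Aᶜ, lam j ≤
            (k : ℝ) + 1 - (A.card : ℝ)) := by
  rw [(isSingleParityCheck_gmat hsys hMDS).mem_serviceRegion_iff]
  constructor
  · rintro ⟨-, y, hy⟩
    exact ⟨fun a b => hy.add_le_two, hy.card_mul_sum_sub_one_add_sum_compl_le hk⟩
  · rintro ⟨hpair, -⟩
    exact ⟨hlam0, _, isParitySplit_of_add_le_two hk hlam0 hpair⟩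

theorem spc_srr_characterization
    {F : Type*} [Field F] [Fintype F] {k : ℕ} (hk : 2 ≤ k)
    (hq : k + (k + 1) + 1 ≤ Fintype.card F)
    (M : Matrix (Fin k) (Fin (k + (k + 1))) F)
    (hsys : ∀ j : Fin k, ∀ r : Fin k,
      M r (Fin.castAdd (k + 1) j) = if r = j then (1 : F) else 0)
    (hMDS : ∀ S : Finset (Fin (k + (k + 1))), S.card = k →
      LinearIndependent F (fun l : S => Mᵀ (l : Fin (k + (k + 1)))))
    (lam : Fin k → ℝ) (hlam0 : ∀ j, 0 ≤ lam j) :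
    lam ∈ ServiceRegion (Gmat M k : Matrix (Fin k) (Fin (k + 1)) F) ↔
      ((∀ a b : Fin k, a ≠ b → lam a + lam b ≤ 2) ∧
        ∀ A : Finset (Fin k),
          (k : ℝ) * (∑ j ∈ A, (lam j - 1)) + ∑ j ∈ Aᶜ, lam j ≤
            (k : ℝ) + 1 - (A.card : ℝ)) :=
  spc_srr_characterization_general hk M hsys hMDS lam hlam0
end
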